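/- arXiv:2211.05893 — 2 statements merged into one kernel-verified Lean document; each statement's English description precedes it below -/
import Mathlib

section
/- Lemma 2.1(i) (mass conservation of the semidiscrete DG scheme): Suppose (u_h, q_h, p_h) together with numerical traces û_h, q̂_h, p̂_h satisfy the semidiscrete DG scheme with zero source. Then the discrete mass is conserved: the function t ↦ Σ_{i=1}^N ∫_{I_i} u_h(x,t) dx is constant on [0,T], i.e. its derivative in t vanishes for every t ∈ [0,T]. -/
open Polynomial Set

noncomputable section

namespace DG

/-- A broken polynomial function in `W_h^k` (before imposing the degree bound):
the polynomial indexed by `i` is the restriction of the function to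
element `I_i = (x (i-1), x i)`, for `i = 1,…,N`. -/
abbrev Broken := ℕ → Polynomial ℝ

/-- Membership in `W_h^k`: every elementwise polynomial has degree at most `k`. -/
def DegLE (k : ℕ) (P : Broken) : Prop := ∀ i, (P i).natDegree ≤ k

/-- `(F, G) = Σ_{i=1}^N ∫_{I_i} F_i G_i dx` for families of functions on the elements. -/
def ip (x : ℕ → ℝ) (N : ℕ) (F G : ℕ → ℝ → ℝ) : ℝ :=
  ∑ i ∈ Finset.Icc 1 N, ∫ y in (x (i-1))..(x i), F i y * G i y

/-- the family of real functions determined by a broken polynomial -/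
def ev (P : Broken) : ℕ → ℝ → ℝ := fun i y => (P i).eval y

/-- elementwise spatial derivative -/
def dx (P : Broken) : Broken := fun i => (P i).derivative

/-- `⟨φ̂, v n⟩ = Σ_{i=1}^N [φ̂(x_i) v(x_i⁻) - φ̂(x_{i-1}) v(x_{i-1}⁺)]` where `φ̂` is a
numerical trace, i.e. a function on the node indices. -/
def bt (x : ℕ → ℝ) (N : ℕ) (φ : ℕ → ℝ) (v : Broken) : ℝ :=
  ∑ i ∈ Finset.Icc 1 N, (φ i * (v i).eval (x i) - φ (i - 1) * (v i).eval (x (i - 1)))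

/-- the one-sided limit `ζ(x_i⁻)` of a broken polynomial at the node `x_i`, `i = 1,…,N` -/
def lv (x : ℕ → ℝ) (P : Broken) (i : ℕ) : ℝ := (P i).eval (x i)

/-- the one-sided limit `ζ(x_i⁺)` at the node `x_i`, with the periodic identification
`ζ(x_N⁺) = ζ(x_0⁺)` -/
def rv (x : ℕ → ℝ) (N : ℕ) (P : Broken) (i : ℕ) : ℝ :=
  if i = N then (P 1).eval (x 0) else (P (i + 1)).eval (x i)

/-- the jump `⟦ζ⟧(x_i) = ζ(x_i⁻) - ζ(x_i⁺)` -/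
def jmp (x : ℕ → ℝ) (N : ℕ) (P : Broken) (i : ℕ) : ℝ := lv x P i - rv x N P i

/-- the average `{ζ}(x_i) = (ζ(x_i⁻) + ζ(x_i⁺))/2` -/
def avg (x : ℕ → ℝ) (N : ℕ) (P : Broken) (i : ℕ) : ℝ := (lv x P i + rv x N P i) / 2

/-- the jump `⟦g(ζ)⟧(x_i)` of a composition `g ∘ ζ` -/
def jmpC (x : ℕ → ℝ) (N : ℕ) (g : ℝ → ℝ) (P : Broken) (i : ℕ) : ℝ :=
  g (lv x P i) - g (rv x N P i)

/-- `η(w,v) = Σ_{i=1}^N ⟦w⟧⟦v⟧(x_i)` -/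
def eta (x : ℕ → ℝ) (N : ℕ) (w v : Broken) : ℝ :=
  ∑ i ∈ Finset.Icc 1 N, jmp x N w i * jmp x N v i

/-- the mesh `a = x 0 < x 1 < ⋯ < x N = b` -/
structure Mesh (a b : ℝ) (N : ℕ) (x : ℕ → ℝ) : Prop where
  hab : a < b
  hN : 1 ≤ N
  left : x 0 = a
  right : x N = b
  mono : ∀ i, i < N → x i < x (i + 1)

/-- `Pf` is the elementwise L²-projection of the function `y ↦ f(ζ(y))` onto `W_h^k`:
it has degree at most `k` and `∫_{I_i} (Pf - f(ζ)) w = 0` for every polynomial `w` of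
degree at most `k` and every element `i`. -/
def IsProj (x : ℕ → ℝ) (N k : ℕ) (f : ℝ → ℝ) (P Pf : Broken) : Prop :=
  DegLE k Pf ∧ ∀ i ∈ Finset.Icc 1 N, ∀ w : Polynomial ℝ, w.natDegree ≤ k →
    (∫ y in (x (i-1))..(x i), ((Pf i).eval y - f ((P i).eval y)) * w.eval y) = 0

/-- a numerical trace takes equal values at the nodes `x_0` and `x_N` -/
def IsTrace (N : ℕ) (φ : ℕ → ℝ) : Prop := φ 0 = φ N

/-- The semidiscrete DG scheme with zero source on `[0,T]`: `u q p : ℝ → Broken`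
are the approximations (depending differentiably on `t`, with time derivatives
`ut qt pt`), and `uh qh ph` are the (possibly `t`-dependent) numerical traces. -/
structure Scheme (x : ℕ → ℝ) (N k : ℕ) (T ε : ℝ) (f : ℝ → ℝ)
    (u q p ut qt pt : ℝ → Broken) (uh qh ph : ℝ → ℕ → ℝ) : Prop where
  degu : ∀ t ∈ Icc (0:ℝ) T, DegLE k (u t)
  degq : ∀ t ∈ Icc (0:ℝ) T, DegLE k (q t)
  degp : ∀ t ∈ Icc (0:ℝ) T, DegLE k (p t)
  degut : ∀ t ∈ Icc (0:ℝ) T, DegLE k (ut t)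
  trace_u : ∀ t ∈ Icc (0:ℝ) T, IsTrace N (uh t)
  trace_q : ∀ t ∈ Icc (0:ℝ) T, IsTrace N (qh t)
  trace_p : ∀ t ∈ Icc (0:ℝ) T, IsTrace N (ph t)
  du : ∀ t ∈ Icc (0:ℝ) T, ∀ i, ∀ y : ℝ,
    HasDerivWithinAt (fun s => ((u s) i).eval y) (((ut t) i).eval y) (Icc (0:ℝ) T) t
  dq : ∀ t ∈ Icc (0:ℝ) T, ∀ i, ∀ y : ℝ,
    HasDerivWithinAt (fun s => ((q s) i).eval y) (((qt t) i).eval y) (Icc (0:ℝ) T) t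
  dp : ∀ t ∈ Icc (0:ℝ) T, ∀ i, ∀ y : ℝ,
    HasDerivWithinAt (fun s => ((p s) i).eval y) (((pt t) i).eval y) (Icc (0:ℝ) T) t
  eq1 : ∀ t ∈ Icc (0:ℝ) T, ∀ v : Broken, DegLE k v →
    ip x N (ev (q t)) (ev v) + ip x N (ev (u t)) (ev (dx v)) - bt x N (uh t) v = 0
  eq2 : ∀ t ∈ Icc (0:ℝ) T, ∀ z : Broken, DegLE k z →
    ip x N (ev (p t)) (ev z) + ε * ip x N (ev (q t)) (ev (dx z)) - ε * bt x N (qh t) z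
      = ip x N (fun i y => f (((u t) i).eval y)) (ev z)
  eq3 : ∀ t ∈ Icc (0:ℝ) T, ∀ w : Broken, DegLE k w →
    ip x N (ev (ut t)) (ev w) - ip x N (ev (p t)) (ev (dx w)) + bt x N (ph t) w = 0

end DG


/-! The time derivative `ut` is tested against the constant function `1`: its spatial
derivative vanishes and the flux term telescopes to `p̂(x_N) - p̂(x_0) = 0` by periodicity,
so the third equation says that `∑ᵢ ∫_{I_i} ∂ₜu_h = 0`. Differentiating under the integral
is legitimate because on each element the integral of a polynomial of degree `≤ k` is a
fixed linear combination of point values. -/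

theorem sum_Icc_one_sub_pred (N : ℕ) (g : ℕ → ℝ) :
    ∑ i ∈ Finset.Icc 1 N, (g i - g (i - 1)) = g N - g 0 := by
  induction N with
  | zero => simp
  | succ n ih =>
    rw [Finset.sum_Icc_succ_top (Nat.le_add_left 1 n), ih]
    simp

theorem Polynomial.exists_integral_eq_sum_mul_eval (k : ℕ) (A B : ℝ) :
    ∃ v c : Fin (k + 1) → ℝ, ∀ P : ℝ[X], P.natDegree ≤ k →
      ∫ y in A..B, P.eval y = ∑ j, c j * P.eval (v j) := by
  let v : Fin (k + 1) → ℝ := fun j => (j : ℕ)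
  let L : Fin (k + 1) → ℝ[X] := Lagrange.basis Finset.univ v
  refine ⟨v, fun j => ∫ y in A..B, (L j).eval y, fun P hP => ?_⟩
  have hv : Set.InjOn v (Finset.univ : Finset (Fin (k + 1))) := fun i _ j _ h =>
    Fin.ext (Nat.cast_injective h)
  have hdeg : P.degree < (Finset.univ : Finset (Fin (k + 1))).card := by
    rw [Finset.card_univ, Fintype.card_fin]
    exact (natDegree_le_iff_degree_le.mp hP).trans_lt (by exact_mod_cast k.lt_succ_self)
  have hinterp : ∀ y, P.eval y = ∑ j, P.eval (v j) * (L j).eval y := fun y => by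
    conv_lhs => rw [Lagrange.eq_interpolate hv hdeg, Lagrange.interpolate_apply]
    simp [L, eval_finsetSum]
  rw [intervalIntegral.integral_congr fun y _ => hinterp y, intervalIntegral.integral_finsetSum
    (f := fun j y => P.eval (v j) * (L j).eval y) fun j _ =>
      (continuous_const.mul (L j).continuous).intervalIntegrable A B]
  simp [intervalIntegral.integral_const_mul, mul_comm]

theorem Polynomial.hasDerivWithinAt_integral_eval {k : ℕ} {S : Set ℝ} {t A B : ℝ}
    {P : ℝ → ℝ[X]} {P' : ℝ[X]} (ht : t ∈ S) (hP : ∀ s ∈ S, (P s).natDegree ≤ k)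
    (hP' : P'.natDegree ≤ k)
    (hderiv : ∀ y, HasDerivWithinAt (fun s => (P s).eval y) (P'.eval y) S t) :
    HasDerivWithinAt (fun s => ∫ y in A..B, (P s).eval y) (∫ y in A..B, P'.eval y) S t := by
  obtain ⟨v, c, hquad⟩ := exists_integral_eq_sum_mul_eval k A B
  rw [hquad P' hP']
  have hsum : HasDerivWithinAt (fun s => ∑ j, c j * (P s).eval (v j))
      (∑ j, c j * P'.eval (v j)) S t :=
    HasDerivWithinAt.fun_sum fun j _ => (hderiv (v j)).const_mul (c j)
  exact hsum.congr_of_mem (fun s hs => hquad _ (hP s hs)) ht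

namespace DG

theorem bt_one (x : ℕ → ℝ) (N : ℕ) (φ : ℕ → ℝ) :
    bt x N φ (fun _ => 1) = φ N - φ 0 := by
  simpa [bt] using sum_Icc_one_sub_pred N φ

theorem ip_one (x : ℕ → ℝ) (N : ℕ) (F : ℕ → ℝ → ℝ) :
    ip x N F (ev fun _ => 1) = ∑ i ∈ Finset.Icc 1 N, ∫ y in (x (i - 1))..(x i), F i y := by
  simp [ip, ev]

theorem ip_dx_one (x : ℕ → ℝ) (N : ℕ) (F : ℕ → ℝ → ℝ) :
    ip x N F (ev (dx fun _ => 1)) = 0 := by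
  simp [ip, ev, dx]

theorem Scheme.sum_integral_ut_eq_zero {x : ℕ → ℝ} {N k : ℕ} {T ε : ℝ} {f : ℝ → ℝ}
    {u q p ut qt pt : ℝ → Broken} {uh qh ph : ℝ → ℕ → ℝ}
    (hS : Scheme x N k T ε f u q p ut qt pt uh qh ph) {t : ℝ} (ht : t ∈ Icc 0 T) :
    ∑ i ∈ Finset.Icc 1 N, ∫ y in (x (i - 1))..(x i), (ut t i).eval y = 0 := by
  have h := hS.eq3 t ht (fun _ => 1) fun _ => by simp
  rw [ip_one, ip_dx_one, bt_one, ← hS.trace_p t ht] at h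
  simpa [ev] using h

end DG

theorem dg_mass_conservation_general
    (N k : ℕ) (x : ℕ → ℝ)
    (T ε : ℝ) (f : ℝ → ℝ)
    (u q p ut qt pt : ℝ → DG.Broken) (uh qh ph : ℝ → ℕ → ℝ)
    (hS : DG.Scheme x N k T ε f u q p ut qt pt uh qh ph) :
    ∀ t ∈ Set.Icc (0:ℝ) T,
      HasDerivWithinAt
        (fun s => ∑ i ∈ Finset.Icc 1 N, ∫ y in (x (i-1))..(x i), ((u s) i).eval y)
        0 (Set.Icc (0:ℝ) T) t := by
  intro t ht
  have hderiv := HasDerivWithinAt.fun_sum fun i (_ : i ∈ Finset.Icc 1 N) =>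
    Polynomial.hasDerivWithinAt_integral_eval (A := x (i - 1)) (B := x i) ht
      (fun s hs => hS.degu s hs i) (hS.degut t ht i) (hS.du t ht i)
  rwa [hS.sum_integral_ut_eq_zero ht] at hderiv

/-- Lemma 2.1(i): mass conservation of the semidiscrete DG scheme with zero source. -/
theorem dg_mass_conservation
    (a b : ℝ) (N k : ℕ) (x : ℕ → ℝ) (hmesh : DG.Mesh a b N x)
    (T ε : ℝ) (hT : 0 < T) (f : ℝ → ℝ) (hf : Continuous f)
    (u q p ut qt pt : ℝ → DG.Broken) (uh qh ph : ℝ → ℕ → ℝ)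
    (hS : DG.Scheme x N k T ε f u q p ut qt pt uh qh ph) :
    ∀ t ∈ Set.Icc (0:ℝ) T,
      HasDerivWithinAt
        (fun s => ∑ i ∈ Finset.Icc 1 N, ∫ y in (x (i-1))..(x i), ((u s) i).eval y)
        0 (Set.Icc (0:ℝ) T) t :=
  dg_mass_conservation_general N k x T ε f u q p ut qt pt uh qh ph hS
end
end

section
/- Lemma 2.1(ii) (energy conservation of the semidiscrete DG scheme): Suppose (u_h, q_h, p_h) together with numerical traces û_h, q̂_h, p̂_h satisfy the semidiscrete DG scheme with zero source, and assume that for every t ∈ [0,T] the traces satisfy the condition 0 = Σ_{i=1}^N ( ⟦V(u_h)⟧ − {Π f(u_h)} ⟦u_h⟧ + (⟦Π f(u_h)⟧ − ⟦p_h⟧)(û_h − {u_h}) − ⟦u_h⟧(p̂_h − {p_h}) + ε ⟦q_h⟧(q̂_h − {q_h}) )(x_i). Then the discrete energy is conserved: t ↦ Σ_{i=1}^N ∫_{I_i} u_h(x,t)² dx is constant on [0,T]. -/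
open Polynomial Set

noncomputable section

/-!
Testing the scheme with `w = u_h`, `v = p_h`, `z = q_h` and `v = Π f(u_h)` and integrating by
parts on each element turns `(∂_t u_h, u_h)` into a sum of node values. The projection lets
`f(u_h)` be replaced by `Π f(u_h)` against `q_h` and `∂_x u_h`, and `∫ f(u_h) ∂_x u_h` telescopes to
jumps of `V(u_h)`. Regrouped with `a⁻b⁻ - a⁺b⁺ = {a}⟦b⟧ + ⟦a⟧{b}`, the node values are exactly the
sum in the trace condition, so `(∂_t u_h, u_h) = 0`.

The time derivative is only given pointwise in `x`; expanding each `u_h(t)` in the Lagrange basis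
on the nodes `0, …, k` writes the energy as a finite quadratic form in point values, which can
then be differentiated term by term.
-/

namespace DG

theorem sum_Icc_sub_one_eq {M : Type*} [AddCommMonoid M] (N : ℕ) (c : ℕ → M) :
    ∑ i ∈ Finset.Icc 1 N, c (i - 1) = ∑ i ∈ Finset.Icc 1 N, if i = N then c 0 else c i := by
  simp only [← Finset.Ico_add_one_right_eq_Icc, Finset.sum_Ico_eq_sum_range,
    Nat.add_sub_cancel, Nat.add_sub_cancel_left]
  cases N with
  | zero => simp
  | succ n =>
    rw [Finset.sum_range_succ', Finset.sum_range_succ, add_comm n 1, if_pos rfl]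
    congr 1
    refine Finset.sum_congr rfl fun j hj => ?_
    rw [if_neg (by rw [Finset.mem_range] at hj; omega), add_comm]

theorem sum_Icc_eval_sub_one_eq (x : ℕ → ℝ) (N : ℕ) (g : ℕ → ℝ → ℝ) :
    ∑ i ∈ Finset.Icc 1 N, g i (x (i - 1))
      = ∑ i ∈ Finset.Icc 1 N, if i = N then g 1 (x 0) else g (i + 1) (x i) := by
  rw [← sum_Icc_sub_one_eq N (fun j => g (j + 1) (x j))]
  refine Finset.sum_congr rfl fun i hi => ?_
  rw [Nat.sub_add_cancel (Finset.mem_Icc.1 hi).1]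

theorem sum_integral_eq_sum_nodes (x : ℕ → ℝ) (N : ℕ) (g g' : ℕ → ℝ → ℝ)
    (hg : ∀ i y, HasDerivAt (g i) (g' i y) y) (hg' : ∀ i, Continuous (g' i)) :
    ∑ i ∈ Finset.Icc 1 N, ∫ y in (x (i - 1))..(x i), g' i y
      = ∑ i ∈ Finset.Icc 1 N,
          (g i (x i) - if i = N then g 1 (x 0) else g (i + 1) (x i)) := by
  have hftc : ∀ i, ∫ y in (x (i - 1))..(x i), g' i y = g i (x i) - g i (x (i - 1)) := fun i =>
    intervalIntegral.integral_eq_sub_of_hasDerivAt (fun y _ => hg i y)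
      ((hg' i).intervalIntegrable _ _)
  simp only [hftc, Finset.sum_sub_distrib, sum_Icc_eval_sub_one_eq]

theorem ip_comm (x : ℕ → ℝ) (N : ℕ) (F G : ℕ → ℝ → ℝ) : ip x N F G = ip x N G F :=
  Finset.sum_congr rfl fun _ _ => intervalIntegral.integral_congr fun _ _ => mul_comm _ _

theorem DegLE.dx {k : ℕ} {P : Broken} (hP : DegLE k P) : DegLE k (dx P) := fun i =>
  (natDegree_derivative_le _).trans ((Nat.sub_le _ 1).trans (hP i))

theorem bt_eq_sum_mul_jmp (x : ℕ → ℝ) (N : ℕ) {φ : ℕ → ℝ} (hφ : IsTrace N φ) (v : Broken) :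
    bt x N φ v = ∑ i ∈ Finset.Icc 1 N, φ i * jmp x N v i := by
  have hleft := sum_Icc_eval_sub_one_eq x N (fun i y => φ (i - 1) * (v i).eval y)
  simp only [Nat.add_sub_cancel, Nat.sub_self] at hleft
  rw [bt, Finset.sum_sub_distrib, hleft, ← Finset.sum_sub_distrib]
  refine Finset.sum_congr rfl fun i _ => ?_
  by_cases h : i = N
  · subst h; rw [if_pos rfl, ← hφ, jmp, lv, rv, if_pos rfl]; ring
  · rw [if_neg h, jmp, lv, rv, if_neg h]; ring

theorem ip_dx_add_ip_dx (x : ℕ → ℝ) (N : ℕ) (P Q : Broken) :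
    ip x N (ev P) (ev (dx Q)) + ip x N (ev (dx P)) (ev Q)
      = ∑ i ∈ Finset.Icc 1 N, (lv x P i * lv x Q i - rv x N P i * rv x N Q i) := by
  have hsplit : ∀ i, ((∫ y in (x (i - 1))..(x i), (P i).eval y * (Q i).derivative.eval y)
      + ∫ y in (x (i - 1))..(x i), (P i).derivative.eval y * (Q i).eval y)
      = ∫ y in (x (i - 1))..(x i),
          ((P i).eval y * (Q i).derivative.eval y + (P i).derivative.eval y * (Q i).eval y) :=
    fun i => (intervalIntegral.integral_add
      (Continuous.intervalIntegrable (by fun_prop) _ _)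
      (Continuous.intervalIntegrable (by fun_prop) _ _)).symm
  rw [ip, ip, ← Finset.sum_add_distrib]
  simp only [ev, dx, hsplit]
  rw [sum_integral_eq_sum_nodes x N (fun i y => (P i).eval y * (Q i).eval y)
    (fun i y => (P i).eval y * (Q i).derivative.eval y + (P i).derivative.eval y * (Q i).eval y)
    (fun i y => (((P i).hasDerivAt y).mul ((Q i).hasDerivAt y)).congr_deriv (add_comm _ _))
    (fun i => by fun_prop)]
  refine Finset.sum_congr rfl fun i _ => ?_
  by_cases h : i = N <;> simp [lv, rv, h]

theorem ip_dx_self (x : ℕ → ℝ) (N : ℕ) (Q : Broken) :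
    ip x N (ev Q) (ev (dx Q))
      = ∑ i ∈ Finset.Icc 1 N, (lv x Q i ^ 2 - rv x N Q i ^ 2) / 2 := by
  have h := ip_dx_add_ip_dx x N Q Q
  rw [ip_comm x N (ev (dx Q)), ← two_mul] at h
  simp only [sq]
  rw [← Finset.sum_div, ← h]
  ring

theorem ip_comp_dx (x : ℕ → ℝ) (N : ℕ) {f V : ℝ → ℝ} (hf : Continuous f)
    (hV : ∀ y, HasDerivAt V (f y) y) (P : Broken) :
    ip x N (fun i y => f ((P i).eval y)) (ev (dx P))
      = ∑ i ∈ Finset.Icc 1 N, jmpC x N V P i := by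
  simp only [ip, ev, dx]
  rw [sum_integral_eq_sum_nodes x N (fun i y => V ((P i).eval y))
    (fun i y => f ((P i).eval y) * (P i).derivative.eval y)
    (fun i y => (hV ((P i).eval y)).comp y ((P i).hasDerivAt y))
    (fun i => by fun_prop)]
  refine Finset.sum_congr rfl fun i _ => ?_
  by_cases h : i = N <;> simp [jmpC, lv, rv, h]

theorem IsProj.ip_eq {x : ℕ → ℝ} {N k : ℕ} {f : ℝ → ℝ} {P Pf : Broken}
    (hPf : IsProj x N k f P Pf) (hf : Continuous f) {w : Broken} (hw : DegLE k w) :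
    ip x N (ev Pf) (ev w) = ip x N (fun i y => f ((P i).eval y)) (ev w) := by
  refine Finset.sum_congr rfl fun i hi => ?_
  have horth := hPf.2 i hi (w i) (hw i)
  simp only [sub_mul] at horth
  rw [intervalIntegral.integral_sub (Continuous.intervalIntegrable (by fun_prop) _ _)
    (Continuous.intervalIntegrable (by fun_prop) _ _)] at horth
  exact sub_eq_zero.1 horth

def lagrangeBasisRange (k j : ℕ) : ℝ[X] :=
  Lagrange.basis (Finset.range (k + 1)) (fun n : ℕ => (n : ℝ)) j

theorem eval_eq_sum_lagrangeBasisRange {k : ℕ} {P : ℝ[X]} (hP : P.natDegree ≤ k) (y : ℝ) :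
    P.eval y = ∑ j ∈ Finset.range (k + 1), P.eval (j : ℝ) * (lagrangeBasisRange k j).eval y := by
  have hinj : Set.InjOn (fun n : ℕ => (n : ℝ)) (Finset.range (k + 1)) :=
    fun _ _ _ _ h => Nat.cast_injective h
  have hdeg : P.degree < (Finset.range (k + 1)).card := by
    rw [Finset.card_range]
    exact P.degree_le_natDegree.trans_lt (by exact_mod_cast Nat.lt_succ_of_le hP)
  conv_lhs => rw [Lagrange.eq_interpolate hinj hdeg]
  simp [Lagrange.interpolate_apply, eval_finsetSum, lagrangeBasisRange]

theorem integral_eval_mul_eq_sum {k : ℕ} {P Q : ℝ[X]} (hP : P.natDegree ≤ k)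
    (hQ : Q.natDegree ≤ k) (α β : ℝ) :
    ∫ y in α..β, P.eval y * Q.eval y
      = ∑ j ∈ Finset.range (k + 1), ∑ l ∈ Finset.range (k + 1), P.eval (j : ℝ) * Q.eval (l : ℝ)
          * ∫ y in α..β, (lagrangeBasisRange k j).eval y * (lagrangeBasisRange k l).eval y := by
  have hexpand : ∀ y, P.eval y * Q.eval y
      = ∑ j ∈ Finset.range (k + 1), ∑ l ∈ Finset.range (k + 1), P.eval (j : ℝ) * Q.eval (l : ℝ)
          * ((lagrangeBasisRange k j).eval y * (lagrangeBasisRange k l).eval y) := fun y => by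
    rw [eval_eq_sum_lagrangeBasisRange hP y, eval_eq_sum_lagrangeBasisRange hQ y,
      Finset.sum_mul_sum]
    exact Finset.sum_congr rfl fun _ _ => Finset.sum_congr rfl fun _ _ => by ring
  simp only [hexpand]
  rw [intervalIntegral.integral_finsetSum fun j _ =>
    Continuous.intervalIntegrable (by fun_prop) _ _]
  refine Finset.sum_congr rfl fun j _ => ?_
  rw [intervalIntegral.integral_finsetSum fun l _ =>
    Continuous.intervalIntegrable (by fun_prop) _ _]
  refine Finset.sum_congr rfl fun l _ => ?_
  exact intervalIntegral.integral_const_mul _ _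

theorem hasDerivWithinAt_integral_eval_mul {k : ℕ} {S : Set ℝ} {t : ℝ} {P Q : ℝ → ℝ[X]}
    {P' Q' : ℝ[X]} (hP : ∀ τ ∈ S, (P τ).natDegree ≤ k) (hQ : ∀ τ ∈ S, (Q τ).natDegree ≤ k)
    (hP' : P'.natDegree ≤ k) (hQ' : Q'.natDegree ≤ k) (ht : t ∈ S)
    (hPd : ∀ y, HasDerivWithinAt (fun τ => (P τ).eval y) (P'.eval y) S t)
    (hQd : ∀ y, HasDerivWithinAt (fun τ => (Q τ).eval y) (Q'.eval y) S t) (α β : ℝ) :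
    HasDerivWithinAt (fun τ => ∫ y in α..β, (P τ).eval y * (Q τ).eval y)
      ((∫ y in α..β, P'.eval y * (Q t).eval y) + ∫ y in α..β, (P t).eval y * Q'.eval y) S t := by
  set M : ℕ → ℕ → ℝ := fun j l =>
    ∫ y in α..β, (lagrangeBasisRange k j).eval y * (lagrangeBasisRange k l).eval y
  have hG : HasDerivWithinAt
      (fun τ => ∑ j ∈ Finset.range (k + 1), ∑ l ∈ Finset.range (k + 1),
        (P τ).eval (j : ℝ) * (Q τ).eval (l : ℝ) * M j l)
      (∑ j ∈ Finset.range (k + 1), ∑ l ∈ Finset.range (k + 1),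
        (P'.eval (j : ℝ) * (Q t).eval (l : ℝ) + (P t).eval (j : ℝ) * Q'.eval (l : ℝ)) * M j l)
      S t :=
    HasDerivWithinAt.fun_sum fun j _ => HasDerivWithinAt.fun_sum fun l _ =>
      ((hPd j).mul (hQd l)).mul_const (M j l)
  have hG' : ∑ j ∈ Finset.range (k + 1), ∑ l ∈ Finset.range (k + 1),
        (P'.eval (j : ℝ) * (Q t).eval (l : ℝ) + (P t).eval (j : ℝ) * Q'.eval (l : ℝ)) * M j l
      = (∫ y in α..β, P'.eval y * (Q t).eval y) + ∫ y in α..β, (P t).eval y * Q'.eval y := by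
    rw [integral_eval_mul_eq_sum hP' (hQ t ht), integral_eval_mul_eq_sum (hP t ht) hQ']
    simp only [add_mul, Finset.sum_add_distrib, M]
  rw [← hG']
  exact hG.congr (fun τ hτ => integral_eval_mul_eq_sum (hP τ hτ) (hQ τ hτ) α β)
    (integral_eval_mul_eq_sum (hP t ht) (hQ t ht) α β)

theorem hasDerivWithinAt_sum_integral_sq (x : ℕ → ℝ) (N : ℕ) {k : ℕ} {S : Set ℝ} {t : ℝ}
    {P : ℝ → Broken} {P' : Broken} (hP : ∀ τ ∈ S, DegLE k (P τ)) (hP' : DegLE k P')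
    (ht : t ∈ S) (hd : ∀ i y, HasDerivWithinAt (fun τ => (P τ i).eval y) ((P' i).eval y) S t) :
    HasDerivWithinAt
      (fun τ => ∑ i ∈ Finset.Icc 1 N, ∫ y in (x (i - 1))..(x i), (P τ i).eval y ^ 2)
      (2 * ip x N (ev P') (ev (P t))) S t := by
  have hsum := HasDerivWithinAt.fun_sum (u := Finset.Icc 1 N) fun i _ =>
    hasDerivWithinAt_integral_eval_mul (fun τ hτ => hP τ hτ i) (fun τ hτ => hP τ hτ i)
      (hP' i) (hP' i) ht (hd i) (hd i) (x (i - 1)) (x i)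
  rw [Finset.sum_add_distrib] at hsum
  rw [two_mul]
  nth_rw 2 [ip_comm]
  simpa only [sq, ip, ev] using hsum

theorem Scheme.ip_dt_self_eq {x : ℕ → ℝ} {N k : ℕ} {T ε : ℝ} {f V : ℝ → ℝ}
    {u q p ut qt pt : ℝ → Broken} {uh qh ph : ℝ → ℕ → ℝ}
    (hS : Scheme x N k T ε f u q p ut qt pt uh qh ph) (hf : Continuous f)
    (hV : ∀ y, HasDerivAt V (f y) y) {t : ℝ} (ht : t ∈ Icc (0 : ℝ) T) {Pf : Broken}
    (hPf : IsProj x N k f (u t) Pf) :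
    ip x N (ev (ut t)) (ev (u t))
      = ∑ i ∈ Finset.Icc 1 N,
          (jmpC x N V (u t) i - avg x N Pf i * jmp x N (u t) i
            + (jmp x N Pf i - jmp x N (p t) i) * (uh t i - avg x N (u t) i)
            - jmp x N (u t) i * (ph t i - avg x N (p t) i)
            + ε * jmp x N (q t) i * (qh t i - avg x N (q t) i)) := by
  have hw_u := hS.eq3 t ht (u t) (hS.degu t ht)
  have hv_p := hS.eq1 t ht (p t) (hS.degp t ht)
  have hz_q := hS.eq2 t ht (q t) (hS.degq t ht)
  have hv_Pf := hS.eq1 t ht Pf hPf.1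
  simp only [bt_eq_sum_mul_jmp x N (hS.trace_u t ht), bt_eq_sum_mul_jmp x N (hS.trace_q t ht),
    bt_eq_sum_mul_jmp x N (hS.trace_p t ht)] at hw_u hv_p hz_q hv_Pf
  have hpu := ip_dx_add_ip_dx x N (p t) (u t)
  have huPf := ip_dx_add_ip_dx x N (u t) Pf
  have hqq := ip_dx_self x N (q t)
  have hqPf : ip x N (fun i y => f ((u t i).eval y)) (ev (q t)) = ip x N (ev (q t)) (ev Pf) := by
    rw [← hPf.ip_eq hf (hS.degq t ht), ip_comm]
  have hVu : ip x N (ev (dx (u t))) (ev Pf) = ∑ i ∈ Finset.Icc 1 N, jmpC x N V (u t) i := by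
    rw [ip_comm, hPf.ip_eq hf (hS.degu t ht).dx, ip_comp_dx x N hf hV]
  have hut : ip x N (ev (ut t)) (ev (u t))
      = ∑ i ∈ Finset.Icc 1 N, (lv x (p t) i * lv x (u t) i - rv x N (p t) i * rv x N (u t) i)
        - ∑ i ∈ Finset.Icc 1 N, ph t i * jmp x N (u t) i
        - ∑ i ∈ Finset.Icc 1 N, uh t i * jmp x N (p t) i + ip x N (ev (q t)) (ev (p t)) := by
    rw [ip_comm x N (ev (dx (p t)))] at hpu
    linarith
  have hqp : ip x N (ev (q t)) (ev (p t))
      = ∑ i ∈ Finset.Icc 1 N, jmpC x N V (u t) i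
        - ∑ i ∈ Finset.Icc 1 N, (lv x (u t) i * lv x Pf i - rv x N (u t) i * rv x N Pf i)
        + ∑ i ∈ Finset.Icc 1 N, uh t i * jmp x N Pf i
        - ε * ∑ i ∈ Finset.Icc 1 N, (lv x (q t) i ^ 2 - rv x N (q t) i ^ 2) / 2
        + ε * ∑ i ∈ Finset.Icc 1 N, qh t i * jmp x N (q t) i := by
    rw [ip_comm x N (ev (q t)) (ev (p t))]
    rw [hqq] at hz_q
    linarith
  rw [hut, hqp]
  simp only [Finset.mul_sum, ← Finset.sum_sub_distrib, ← Finset.sum_add_distrib]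
  refine Finset.sum_congr rfl fun i _ => ?_
  simp only [jmp, avg, jmpC]
  ring

end DG

theorem dg_energy_conservation_general
    (N k : ℕ) (x : ℕ → ℝ)
    (T ε : ℝ) (f V : ℝ → ℝ) (hf : Continuous f)
    (hV : ∀ y : ℝ, HasDerivAt V (f y) y)
    (u q p ut qt pt : ℝ → DG.Broken) (uh qh ph : ℝ → ℕ → ℝ)
    (hS : DG.Scheme x N k T ε f u q p ut qt pt uh qh ph)
    (Pf : ℝ → DG.Broken)
    (hPf : ∀ t ∈ Set.Icc (0:ℝ) T, DG.IsProj x N k f (u t) (Pf t))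
    (hcond : ∀ t ∈ Set.Icc (0:ℝ) T,
      0 = ∑ i ∈ Finset.Icc 1 N,
        (DG.jmpC x N V (u t) i - DG.avg x N (Pf t) i * DG.jmp x N (u t) i
          + (DG.jmp x N (Pf t) i - DG.jmp x N (p t) i) * (uh t i - DG.avg x N (u t) i)
          - DG.jmp x N (u t) i * (ph t i - DG.avg x N (p t) i)
          + ε * DG.jmp x N (q t) i * (qh t i - DG.avg x N (q t) i))) :
    ∀ t₁ ∈ Set.Icc (0:ℝ) T, ∀ t₂ ∈ Set.Icc (0:ℝ) T,
      (∑ i ∈ Finset.Icc 1 N, ∫ y in (x (i-1))..(x i), ((u t₁) i).eval y ^ 2)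
        = ∑ i ∈ Finset.Icc 1 N, ∫ y in (x (i-1))..(x i), ((u t₂) i).eval y ^ 2 := by
  set energy : ℝ → ℝ := fun s =>
    ∑ i ∈ Finset.Icc 1 N, ∫ y in (x (i-1))..(x i), ((u s) i).eval y ^ 2
  have hderiv : ∀ t ∈ Set.Icc (0:ℝ) T, HasDerivWithinAt energy 0 (Set.Icc (0:ℝ) T) t := by
    intro t ht
    have hflux := (hS.ip_dt_self_eq hf hV ht (hPf t ht)).trans (hcond t ht).symm
    simpa [hflux] using
      DG.hasDerivWithinAt_sum_integral_sq x N hS.degu (hS.degut t ht) ht (hS.du t ht)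
  have hconst : ∀ s ∈ Set.Icc (0:ℝ) T, energy s = energy 0 :=
    constant_of_has_deriv_right_zero (fun s hs => (hderiv s hs).continuousWithinAt)
      fun s hs => (hderiv s (Set.mem_Icc_of_Ico hs)).mono_of_mem_nhdsWithin
        (Icc_mem_nhdsGE_of_mem hs)
  intro t₁ ht₁ t₂ ht₂
  exact (hconst t₁ ht₁).trans (hconst t₂ ht₂).symm

/-- Lemma 2.1(ii): energy conservation of the semidiscrete DG scheme with zero source,
under the trace condition (2.6). -/
theorem dg_energy_conservation
    (a b : ℝ) (N k : ℕ) (x : ℕ → ℝ) (hmesh : DG.Mesh a b N x)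
    (T ε : ℝ) (hT : 0 < T) (f V : ℝ → ℝ) (hf : Continuous f)
    (hV : ∀ y : ℝ, HasDerivAt V (f y) y)
    (u q p ut qt pt : ℝ → DG.Broken) (uh qh ph : ℝ → ℕ → ℝ)
    (hS : DG.Scheme x N k T ε f u q p ut qt pt uh qh ph)
    (Pf : ℝ → DG.Broken)
    (hPf : ∀ t ∈ Set.Icc (0:ℝ) T, DG.IsProj x N k f (u t) (Pf t))
    (hcond : ∀ t ∈ Set.Icc (0:ℝ) T,
      0 = ∑ i ∈ Finset.Icc 1 N,
        (DG.jmpC x N V (u t) i - DG.avg x N (Pf t) i * DG.jmp x N (u t) i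
          + (DG.jmp x N (Pf t) i - DG.jmp x N (p t) i) * (uh t i - DG.avg x N (u t) i)
          - DG.jmp x N (u t) i * (ph t i - DG.avg x N (p t) i)
          + ε * DG.jmp x N (q t) i * (qh t i - DG.avg x N (q t) i))) :
    ∀ t₁ ∈ Set.Icc (0:ℝ) T, ∀ t₂ ∈ Set.Icc (0:ℝ) T,
      (∑ i ∈ Finset.Icc 1 N, ∫ y in (x (i-1))..(x i), ((u t₁) i).eval y ^ 2)
        = ∑ i ∈ Finset.Icc 1 N, ∫ y in (x (i-1))..(x i), ((u t₂) i).eval y ^ 2 :=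
  dg_energy_conservation_general N k x T ε f V hf hV u q p ut qt pt uh qh ph hS Pf hPf hcond
end
end
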